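/- arXiv:2501.15846 — 2 statements merged into one kernel-verified Lean document; each statement's English description precedes it below -/
import Mathlib

section
/- If the polarization vector f^μ is parallel transported along the null geodesic p^μ (p^α ∇_α f^μ = 0) and satisfies p_μ f^μ = 0, then the transverse polarization vector ε^μ := S^μ_ν f^ν satisfies p^α ∇_α ε^μ = (p^μ/p) ε_β p^α ∇_α u^β, and consequently its transverse directional derivative along p vanishes: S^μ_ν p^α ∇_α ε^ν = 0. -/
/-! Since `p_μ f^μ = 0`, projecting onto the screen only adds a multiple of `p` to `f`:
`ε = f + (u_λ f^λ / p) p`. Along `p`, both `f` and `p` are parallel, so `∇_p ε` is the derivative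
of that coefficient times `p`. Metric compatibility gives `p^α ∂_α (u_λ f^λ) = (∇_p u)_λ f^λ` and
`p^α ∂_α p = -(∇_p u)_λ p^λ`, so by the quotient rule the coefficient's derivative is
`(∇_p u)_λ ε^λ / p`. The screen projector annihilates the null vector `p`, hence also `∇_p ε`. -/

/-- Points of the coordinate chart of a 4-dimensional spacetime. -/
abbrev Pt := Fin 4 → ℝ

/-- Coordinate partial derivative ∂_ν f of a real scalar field. -/
noncomputable def pd (f : Pt → ℝ) (ν : Fin 4) (x : Pt) : ℝ :=
  fderiv ℝ f x (Pi.single ν 1)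

/-- Coordinate partial derivative of a complex scalar field. -/
noncomputable def pdC (f : Pt → ℂ) (ν : Fin 4) (x : Pt) : ℂ :=
  fderiv ℝ f x (Pi.single ν 1)

/-- Covariant derivative ∇_ν V^μ = ∂_ν V^μ + Γ^μ_{νλ} V^λ (real fields). -/
noncomputable def covD (Γ : Pt → Fin 4 → Fin 4 → Fin 4 → ℝ) (V : Pt → Fin 4 → ℝ)
    (μ ν : Fin 4) (x : Pt) : ℝ :=
  pd (fun y => V y μ) ν x + ∑ lam, Γ x μ ν lam * V x lam

/-- Directional covariant derivative (real fields). -/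
noncomputable def dirD (Γ : Pt → Fin 4 → Fin 4 → Fin 4 → ℝ) (U V : Pt → Fin 4 → ℝ)
    (μ : Fin 4) (x : Pt) : ℝ :=
  ∑ ν, U x ν * covD Γ V μ ν x

/-- Covariant derivative of a complex vector field. -/
noncomputable def covDC (Γ : Pt → Fin 4 → Fin 4 → Fin 4 → ℝ) (V : Pt → Fin 4 → ℂ)
    (μ ν : Fin 4) (x : Pt) : ℂ :=
  pdC (fun y => V y μ) ν x + ∑ lam, (Γ x μ ν lam : ℂ) * V x lam

/-- Directional covariant derivative of a complex vector field. -/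
noncomputable def dirDC (Γ : Pt → Fin 4 → Fin 4 → Fin 4 → ℝ) (U : Pt → Fin 4 → ℝ)
    (V : Pt → Fin 4 → ℂ) (μ : Fin 4) (x : Pt) : ℂ :=
  ∑ ν, (U x ν : ℂ) * covDC Γ V μ ν x

/-- Photon energy in the rest frame: p := −u_μ p^μ. -/
noncomputable def pscal (g : Pt → Matrix (Fin 4) (Fin 4) ℝ) (u P : Pt → Fin 4 → ℝ)
    (x : Pt) : ℝ :=
  -(∑ μ, ∑ ν, g x μ ν * u x μ * P x ν)

/-- The lowered field v_ν = g_{να} v^α. -/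
noncomputable def lowerField (g : Pt → Matrix (Fin 4) (Fin 4) ℝ) (v : Pt → Fin 4 → ℝ)
    (x : Pt) (ν : Fin 4) : ℝ :=
  ∑ α, g x ν α * v x α

/-- The spatial propagation direction p̂^μ := p^μ/p − u^μ. -/
noncomputable def phatF (g : Pt → Matrix (Fin 4) (Fin 4) ℝ) (u P : Pt → Fin 4 → ℝ)
    (x : Pt) (μ : Fin 4) : ℝ :=
  P x μ / pscal g u P x - u x μ

/-- The screen projector field S^μ_ν = δ^μ_ν + u^μ u_ν − p̂^μ p̂_ν. -/
noncomputable def SmixF (g : Pt → Matrix (Fin 4) (Fin 4) ℝ) (u P : Pt → Fin 4 → ℝ)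
    (x : Pt) (μ ν : Fin 4) : ℝ :=
  (if μ = ν then (1 : ℝ) else 0) + u x μ * lowerField g u x ν
    - phatF g u P x μ * lowerField g (phatF g u P) x ν

/-- The transverse polarization vector ε^μ := S^μ_ν f^ν. -/
noncomputable def epsF (g : Pt → Matrix (Fin 4) (Fin 4) ℝ) (u P : Pt → Fin 4 → ℝ)
    (f : Pt → Fin 4 → ℂ) (x : Pt) (μ : Fin 4) : ℂ :=
  ∑ ν, (SmixF g u P x μ ν : ℂ) * f x ν

open Matrix

section Calculus

variable {x : Pt}

lemma pd_mul {a b : Pt → ℝ} (ha : DifferentiableAt ℝ a x) (hb : DifferentiableAt ℝ b x)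
    (ν : Fin 4) : pd (fun y => a y * b y) ν x = pd a ν x * b x + a x * pd b ν x := by
  simp [pd, fderiv_fun_mul ha hb]
  ring

lemma pd_sum {n : ℕ} {F : Fin n → Pt → ℝ} (hF : ∀ i, DifferentiableAt ℝ (F i) x) (ν : Fin 4) :
    pd (fun y => ∑ i, F i y) ν x = ∑ i, pd (F i) ν x := by
  simp [pd, fderiv_fun_sum fun i _ => hF i]

lemma pdC_add {a b : Pt → ℂ} (ha : DifferentiableAt ℝ a x) (hb : DifferentiableAt ℝ b x)
    (ν : Fin 4) : pdC (fun y => a y + b y) ν x = pdC a ν x + pdC b ν x := by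
  simp [pdC, fderiv_fun_add ha hb]

lemma pdC_mul {a b : Pt → ℂ} (ha : DifferentiableAt ℝ a x) (hb : DifferentiableAt ℝ b x)
    (ν : Fin 4) : pdC (fun y => a y * b y) ν x = pdC a ν x * b x + a x * pdC b ν x := by
  simp [pdC, fderiv_fun_mul ha hb]
  ring

lemma pdC_inv {a : Pt → ℂ} (ha : DifferentiableAt ℝ a x) (hx : a x ≠ 0) (ν : Fin 4) :
    pdC (fun y => (a y)⁻¹) ν x = -pdC a ν x / a x ^ 2 := by
  rw [pdC, show (fun y => (a y)⁻¹) = Inv.inv ∘ a from rfl,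
    ((hasFDerivAt_inv' hx).comp x ha.hasFDerivAt).fderiv]
  simp [pdC]
  field_simp

lemma pdC_sum {n : ℕ} {F : Fin n → Pt → ℂ} (hF : ∀ i, DifferentiableAt ℝ (F i) x) (ν : Fin 4) :
    pdC (fun y => ∑ i, F i y) ν x = ∑ i, pdC (F i) ν x := by
  simp [pdC, fderiv_fun_sum fun i _ => hF i]

lemma pdC_ofReal {a : Pt → ℝ} (ha : DifferentiableAt ℝ a x) (ν : Fin 4) :
    pdC (fun y => (a y : ℂ)) ν x = pd a ν x := by
  rw [pdC, pd, show (fun y => (a y : ℂ)) = Complex.ofRealCLM ∘ a from rfl,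
    (Complex.ofRealCLM.hasFDerivAt.comp x ha.hasFDerivAt).fderiv]
  rfl

end Calculus

noncomputable def dirDScalar (U : Pt → Fin 4 → ℝ) (s : Pt → ℂ) (x : Pt) : ℂ :=
  ∑ ν, (U x ν : ℂ) * pdC s ν x

noncomputable def pairing (g : Pt → Matrix (Fin 4) (Fin 4) ℝ) (v : Pt → Fin 4 → ℝ) (x : Pt)
    (w : Fin 4 → ℂ) : ℂ :=
  (fun ν => (lowerField g v x ν : ℂ)) ⬝ᵥ w

section ProductRules

variable {Γ : Pt → Fin 4 → Fin 4 → Fin 4 → ℝ} {U : Pt → Fin 4 → ℝ} {x : Pt}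

lemma dirDScalar_div {s h : Pt → ℂ} (hs : DifferentiableAt ℝ s x) (hh : DifferentiableAt ℝ h x)
    (hx : h x ≠ 0) :
    dirDScalar U (fun y => s y / h y) x
      = (dirDScalar U s x * h x - s x * dirDScalar U h x) / h x ^ 2 := by
  have hdiv : ∀ ν, pdC (fun y => s y / h y) ν x
      = (pdC s ν x * h x - s x * pdC h ν x) / h x ^ 2 := fun ν => by
    simp only [div_eq_mul_inv]
    rw [pdC_mul hs (hh.fun_inv hx), pdC_inv hh hx]
    field_simp
    ring
  simp only [dirDScalar, hdiv, Finset.sum_div, Finset.sum_mul, Finset.mul_sum,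
    ← Finset.sum_sub_distrib]
  refine Finset.sum_congr rfl fun ν _ => ?_
  ring

lemma dirDScalar_neg (s : Pt → ℂ) :
    dirDScalar U (fun y => -s y) x = -dirDScalar U s x := by
  simp [dirDScalar, pdC]

lemma dirDC_add_mul {f : Pt → Fin 4 → ℂ} {c : Pt → ℂ} {V : Pt → Fin 4 → ℝ}
    (hf : ∀ μ, DifferentiableAt ℝ (fun y => f y μ) x) (hc : DifferentiableAt ℝ c x)
    (hV : ∀ μ, DifferentiableAt ℝ (fun y => V y μ) x) (μ : Fin 4) :
    dirDC Γ U (fun y μ => f y μ + c y * V y μ) μ x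
      = dirDC Γ U f μ x + c x * dirD Γ U V μ x + dirDScalar U c x * V x μ := by
  have hcV : DifferentiableAt ℝ (fun y => (V y μ : ℂ)) x := by fun_prop
  have hpd : ∀ ν, pdC (fun y => f y μ + c y * V y μ) ν x
      = pdC (fun y => f y μ) ν x + pdC c ν x * V x μ + c x * pd (fun y => V y μ) ν x :=
    fun ν => by rw [pdC_add (hf μ) (hc.fun_mul hcV), pdC_mul hc hcV, pdC_ofReal (hV μ), add_assoc]
  simp only [dirDC, covDC, dirD, covD, dirDScalar, hpd]
  push_cast
  simp only [Fin.sum_univ_four]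
  ring

lemma dirDC_ofReal {V : Pt → Fin 4 → ℝ} (hV : ∀ μ, DifferentiableAt ℝ (fun y => V y μ) x)
    (μ : Fin 4) : dirDC Γ U (fun y μ => (V y μ : ℂ)) μ x = dirD Γ U V μ x := by
  simp only [dirDC, covDC, dirD, covD, pdC_ofReal (hV μ)]
  push_cast
  rfl

end ProductRules

section Leibniz

variable {g : Pt → Matrix (Fin 4) (Fin 4) ℝ} {Γ : Pt → Fin 4 → Fin 4 → Fin 4 → ℝ}
  {U v : Pt → Fin 4 → ℝ} {w : Pt → Fin 4 → ℂ} {x : Pt}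

lemma differentiableAt_lowerField (hgD : ∀ μ ν, DifferentiableAt ℝ (fun y => g y μ ν) x)
    (hvD : ∀ μ, DifferentiableAt ℝ (fun y => v y μ) x) (μ : Fin 4) :
    DifferentiableAt ℝ (fun y => lowerField g v y μ) x := by
  unfold lowerField
  fun_prop

lemma differentiableAt_pairing (hgD : ∀ μ ν, DifferentiableAt ℝ (fun y => g y μ ν) x)
    (hvD : ∀ μ, DifferentiableAt ℝ (fun y => v y μ) x)
    (hwD : ∀ μ, DifferentiableAt ℝ (fun y => w y μ) x) :
    DifferentiableAt ℝ (fun y => pairing g v y (w y)) x := by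
  have := differentiableAt_lowerField hgD hvD
  unfold pairing dotProduct
  fun_prop

lemma pd_lowerField (hgD : ∀ μ ν, DifferentiableAt ℝ (fun y => g y μ ν) x)
    (hvD : ∀ μ, DifferentiableAt ℝ (fun y => v y μ) x) (μ ν : Fin 4) :
    pd (fun y => lowerField g v y μ) ν x
      = ∑ α, (pd (fun y => g y μ α) ν x * v x α + g x μ α * pd (fun y => v y α) ν x) := by
  change pd (fun y => ∑ α, g y μ α * v y α) ν x = _
  rw [pd_sum fun α => (hgD μ α).fun_mul (hvD α)]
  exact Finset.sum_congr rfl fun α _ => pd_mul (hgD μ α) (hvD α) ν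

lemma pdC_pairing (hgD : ∀ μ ν, DifferentiableAt ℝ (fun y => g y μ ν) x)
    (hvD : ∀ μ, DifferentiableAt ℝ (fun y => v y μ) x)
    (hwD : ∀ μ, DifferentiableAt ℝ (fun y => w y μ) x) (ν : Fin 4) :
    pdC (fun y => pairing g v y (w y)) ν x
      = ∑ μ, ((pd (fun y => lowerField g v y μ) ν x : ℂ) * w x μ
          + lowerField g v x μ * pdC (fun y => w y μ) ν x) := by
  have hlow : ∀ μ, DifferentiableAt ℝ (fun y => (lowerField g v y μ : ℂ)) x := fun μ => by
    have := differentiableAt_lowerField hgD hvD μ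
    fun_prop
  change pdC (fun y => ∑ μ, (lowerField g v y μ : ℂ) * w y μ) ν x = _
  rw [pdC_sum fun μ => (hlow μ).fun_mul (hwD μ)]
  refine Finset.sum_congr rfl fun μ _ => ?_
  rw [pdC_mul (hlow μ) (hwD μ), pdC_ofReal (differentiableAt_lowerField hgD hvD μ)]

lemma dirDScalar_pairing
    (hCompat : ∀ lam μ ν, pd (fun y => g y μ ν) lam x =
      (∑ α, Γ x α lam μ * g x α ν) + ∑ α, Γ x α lam ν * g x μ α)
    (hgD : ∀ μ ν, DifferentiableAt ℝ (fun y => g y μ ν) x)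
    (hvD : ∀ μ, DifferentiableAt ℝ (fun y => v y μ) x)
    (hwD : ∀ μ, DifferentiableAt ℝ (fun y => w y μ) x) :
    dirDScalar U (fun y => pairing g v y (w y)) x
      = pairing g (fun y μ => dirD Γ U v μ y) x (w x)
        + pairing g v x (fun μ => dirDC Γ U w μ x) := by
  simp only [dirDScalar, pdC_pairing hgD hvD hwD, pd_lowerField hgD hvD, hCompat]
  simp only [pairing, dotProduct, lowerField, dirD, covD, dirDC, covDC]
  push_cast
  simp only [Fin.sum_univ_four]
  ring

end Leibniz

section Screen

variable {g : Pt → Matrix (Fin 4) (Fin 4) ℝ} {u P : Pt → Fin 4 → ℝ} {x : Pt}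

lemma pairing_zero (v : Pt → Fin 4 → ℝ) : pairing g v x 0 = 0 :=
  dotProduct_zero _

lemma pairing_add_mul (v : Pt → Fin 4 → ℝ) (w w' : Fin 4 → ℂ) (c : ℂ) :
    pairing g v x (fun μ => w μ + c * w' μ) = pairing g v x w + c * pairing g v x w' := by
  simp only [pairing, dotProduct, mul_add, Finset.sum_add_distrib, Finset.mul_sum, mul_left_comm]

lemma pairing_ofReal_eq_sum (v w : Pt → Fin 4 → ℝ) :
    pairing g v x (fun μ => (w x μ : ℂ)) = ((∑ μ, ∑ ν, g x μ ν * v x ν * w x μ : ℝ) : ℂ) := by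
  simp only [pairing, dotProduct, lowerField]
  push_cast
  simp only [Finset.sum_mul]

lemma pscal_eq_neg_pairing (hgSymm : ∀ μ ν, g x μ ν = g x ν μ) :
    (pscal g u P x : ℂ) = -pairing g u x (fun μ => (P x μ : ℂ)) := by
  rw [pairing_ofReal_eq_sum, pscal, Complex.ofReal_neg, Finset.sum_comm]
  simp only [hgSymm]

lemma pairing_self_of_null (hNull : (∑ μ, ∑ ν, g x μ ν * P x μ * P x ν) = 0) :
    pairing g P x (fun μ => (P x μ : ℂ)) = 0 := by
  rw [pairing_ofReal_eq_sum, Complex.ofReal_eq_zero, ← hNull]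
  exact Finset.sum_congr rfl fun _ _ => Finset.sum_congr rfl fun _ _ => mul_right_comm _ _ _

lemma pairing_eq_sum_lower_mul (hgSymm : ∀ μ ν, g x μ ν = g x ν μ) (v : Pt → Fin 4 → ℝ)
    (w : Fin 4 → ℂ) :
    pairing g v x w = ∑ β, (∑ α, (g x β α : ℂ) * w α) * (v x β : ℂ) := by
  simp only [pairing, dotProduct, lowerField, Finset.sum_mul]
  push_cast
  rw [Finset.sum_comm]
  simp only [Finset.sum_mul, hgSymm]
  refine Finset.sum_congr rfl fun _ _ => Finset.sum_congr rfl fun _ _ => by ring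

lemma lowerField_phatF (ν : Fin 4) :
    lowerField g (phatF g u P) x ν = lowerField g P x ν / pscal g u P x - lowerField g u x ν := by
  simp only [lowerField, phatF, mul_sub, Finset.sum_sub_distrib, Finset.sum_div, mul_div_assoc]

lemma sum_SmixF_mul (w : Fin 4 → ℂ) (μ : Fin 4) :
    ∑ ν, (SmixF g u P x μ ν : ℂ) * w ν
      = w μ + u x μ * pairing g u x w
        - phatF g u P x μ * (pairing g P x w / pscal g u P x - pairing g u x w) := by
  simp only [SmixF, lowerField_phatF, pairing, dotProduct]
  push_cast [apply_ite]
  simp only [add_mul, sub_mul, ite_mul, one_mul, zero_mul, Finset.sum_add_distrib,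
    Finset.sum_sub_distrib, Finset.sum_ite_eq, Finset.mem_univ, if_true, Finset.sum_div,
    Finset.mul_sum, mul_assoc, mul_sub, div_mul_eq_mul_div]

lemma sum_SmixF_mul_P_eq_zero (hgSymm : ∀ μ ν, g x μ ν = g x ν μ)
    (hNull : (∑ μ, ∑ ν, g x μ ν * P x μ * P x ν) = 0) (hp : pscal g u P x ≠ 0) (μ : Fin 4) :
    ∑ ν, (SmixF g u P x μ ν : ℂ) * P x ν = 0 := by
  have hpC : (pscal g u P x : ℂ) ≠ 0 := Complex.ofReal_ne_zero.mpr hp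
  have huP : pairing g u x (fun ν => (P x ν : ℂ)) = -pscal g u P x := by
    rw [pscal_eq_neg_pairing hgSymm, neg_neg]
  rw [sum_SmixF_mul, pairing_self_of_null hNull, huP, phatF]
  push_cast
  field_simp
  ring

end Screen

section Polarization

variable {g : Pt → Matrix (Fin 4) (Fin 4) ℝ} {Γ : Pt → Fin 4 → Fin 4 → Fin 4 → ℝ}
  {u P : Pt → Fin 4 → ℝ} {f : Pt → Fin 4 → ℂ} {x : Pt}

lemma epsF_eq_add_mul (hp : ∀ y, pscal g u P y ≠ 0) (hOrth : ∀ y, pairing g P y (f y) = 0) :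
    epsF g u P f = fun y μ => f y μ + pairing g u y (f y) / pscal g u P y * P y μ := by
  funext y μ
  have hpC : (pscal g u P y : ℂ) ≠ 0 := Complex.ofReal_ne_zero.mpr (hp y)
  rw [epsF, sum_SmixF_mul, hOrth y, phatF]
  push_cast
  field_simp
  ring

lemma dirDScalar_pscal (hgSymm : ∀ y μ ν, g y μ ν = g y ν μ)
    (hCompat : ∀ lam μ ν, pd (fun y => g y μ ν) lam x =
      (∑ α, Γ x α lam μ * g x α ν) + ∑ α, Γ x α lam ν * g x μ α)
    (hgD : ∀ μ ν, DifferentiableAt ℝ (fun y => g y μ ν) x)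
    (huD : ∀ μ, DifferentiableAt ℝ (fun y => u y μ) x)
    (hPD : ∀ μ, DifferentiableAt ℝ (fun y => P y μ) x) (hPgeo : ∀ μ, dirD Γ P P μ x = 0) :
    dirDScalar P (fun y => (pscal g u P y : ℂ)) x
      = -pairing g (fun y μ => dirD Γ P u μ y) x (fun μ => (P x μ : ℂ)) := by
  have hPC : ∀ μ, DifferentiableAt ℝ (fun y => (P y μ : ℂ)) x := fun μ => by
    have := hPD μ
    fun_prop
  have hDP : (fun μ => dirDC Γ P (fun y μ => (P y μ : ℂ)) μ x) = 0 := by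
    funext μ
    rw [dirDC_ofReal hPD, hPgeo, Complex.ofReal_zero, Pi.zero_apply]
  rw [funext fun y => pscal_eq_neg_pairing (hgSymm y), dirDScalar_neg,
    dirDScalar_pairing hCompat hgD huD hPC, hDP, pairing_zero, add_zero]

lemma dirDC_epsF (hgSymm : ∀ y μ ν, g y μ ν = g y ν μ)
    (hCompat : ∀ lam μ ν, pd (fun y => g y μ ν) lam x =
      (∑ α, Γ x α lam μ * g x α ν) + ∑ α, Γ x α lam ν * g x μ α)
    (hgD : ∀ μ ν, DifferentiableAt ℝ (fun y => g y μ ν) x)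
    (huD : ∀ μ, DifferentiableAt ℝ (fun y => u y μ) x)
    (hPD : ∀ μ, DifferentiableAt ℝ (fun y => P y μ) x)
    (hfD : ∀ μ, DifferentiableAt ℝ (fun y => f y μ) x)
    (hp : ∀ y, pscal g u P y ≠ 0) (hOrth : ∀ y, pairing g P y (f y) = 0)
    (hPgeo : ∀ μ, dirD Γ P P μ x = 0) (hPar : ∀ μ, dirDC Γ P f μ x = 0) (μ : Fin 4) :
    dirDC Γ P (epsF g u P f) μ x
      = P x μ / pscal g u P x * pairing g (fun y ν => dirD Γ P u ν y) x (epsF g u P f x) := by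
  have hpC : (pscal g u P x : ℂ) ≠ 0 := Complex.ofReal_ne_zero.mpr (hp x)
  have hsD := differentiableAt_pairing hgD huD hfD
  have hpD : DifferentiableAt ℝ (fun y => (pscal g u P y : ℂ)) x := by
    unfold pscal
    fun_prop
  have hcD : DifferentiableAt ℝ (fun y => pairing g u y (f y) / pscal g u P y) x := by
    simpa only [div_eq_mul_inv] using hsD.fun_mul (hpD.fun_inv hpC)
  have hDs : dirDScalar P (fun y => pairing g u y (f y)) x
      = pairing g (fun y ν => dirD Γ P u ν y) x (f x) := by
    rw [dirDScalar_pairing hCompat hgD huD hfD, show (fun ν => dirDC Γ P f ν x) = 0 from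
      funext hPar, pairing_zero, add_zero]
  rw [epsF_eq_add_mul hp hOrth, dirDC_add_mul hfD hcD hPD, hPar, hPgeo, Complex.ofReal_zero,
    dirDScalar_div hsD hpD hpC, hDs, dirDScalar_pscal hgSymm hCompat hgD huD hPD hPgeo]
  beta_reduce
  rw [pairing_add_mul]
  field_simp
  ring

end Polarization

theorem transverse_polarization_transport_general
    (g : Pt → Matrix (Fin 4) (Fin 4) ℝ) (Γ : Pt → Fin 4 → Fin 4 → Fin 4 → ℝ)
    (u P : Pt → Fin 4 → ℝ) (f : Pt → Fin 4 → ℂ)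
    (hgSymm : ∀ x μ ν, g x μ ν = g x ν μ)
    (hCompat : ∀ x lam μ ν, pd (fun y => g y μ ν) lam x =
      (∑ α, Γ x α lam μ * g x α ν) + ∑ α, Γ x α lam ν * g x μ α)
    (hgD : ∀ μ ν, Differentiable ℝ fun y => g y μ ν)
    (huD : ∀ μ, Differentiable ℝ fun y => u y μ)
    (hPD : ∀ μ, Differentiable ℝ fun y => P y μ)
    (hfD : ∀ μ, Differentiable ℝ fun y => f y μ)
    (hNull : ∀ x, (∑ μ, ∑ ν, g x μ ν * P x μ * P x ν) = 0)
    (hPgeo : ∀ x μ, dirD Γ P P μ x = 0)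
    (hpos : ∀ x, 0 < pscal g u P x)
    (hOrth : ∀ x, (∑ μ, (lowerField g P x μ : ℂ) * f x μ) = 0)
    (hPar : ∀ x μ, dirDC Γ P f μ x = 0) :
    (∀ x μ,
      dirDC Γ P (epsF g u P f) μ x =
        ((P x μ / pscal g u P x : ℝ) : ℂ) *
          ∑ β, (∑ α, (g x β α : ℂ) * epsF g u P f x α) * ((dirD Γ P u β x : ℝ) : ℂ)) ∧
    (∀ x μ, (∑ ν, (SmixF g u P x μ ν : ℂ) * dirDC Γ P (epsF g u P f) ν x) = 0) := by
  have hp : ∀ x, pscal g u P x ≠ 0 := fun x => (hpos x).ne'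
  have hTransport : ∀ x μ, dirDC Γ P (epsF g u P f) μ x
      = P x μ / pscal g u P x * pairing g (fun y ν => dirD Γ P u ν y) x (epsF g u P f x) :=
    fun x => dirDC_epsF hgSymm (hCompat x) (fun μ ν => hgD μ ν x) (fun μ => huD μ x)
      (fun μ => hPD μ x) (fun μ => hfD μ x) hp hOrth (hPgeo x) (hPar x)
  refine ⟨fun x μ => ?_, fun x μ => ?_⟩
  · rw [hTransport, pairing_eq_sum_lower_mul (hgSymm x)]
    push_cast
    rfl
  · set K := pairing g (fun y ν => dirD Γ P u ν y) x (epsF g u P f x)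
    calc ∑ ν, (SmixF g u P x μ ν : ℂ) * dirDC Γ P (epsF g u P f) ν x
        = (∑ ν, (SmixF g u P x μ ν : ℂ) * P x ν) * (K / pscal g u P x) := by
          simp only [hTransport, Finset.sum_mul]
          exact Finset.sum_congr rfl fun ν _ => by ring
      _ = 0 := by rw [sum_SmixF_mul_P_eq_zero (hgSymm x) (hNull x) (hp x), zero_mul]

/-- If the polarization vector f^μ is parallel transported along the
null geodesic p and satisfies p_μ f^μ = 0, then the transverse polarization vector
ε^μ := S^μ_ν f^ν satisfies p^α ∇_α ε^μ = (p^μ/p) ε_β p^α ∇_α u^β, and its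
transverse directional derivative along p vanishes: S^μ_ν p^α ∇_α ε^ν = 0. -/
theorem transverse_polarization_transport
    (g : Pt → Matrix (Fin 4) (Fin 4) ℝ) (Γ : Pt → Fin 4 → Fin 4 → Fin 4 → ℝ)
    (u P : Pt → Fin 4 → ℝ) (f : Pt → Fin 4 → ℂ)
    (hgSymm : ∀ x μ ν, g x μ ν = g x ν μ)
    (hΓSymm : ∀ x μ ν lam, Γ x μ ν lam = Γ x μ lam ν)
    (hCompat : ∀ x lam μ ν, pd (fun y => g y μ ν) lam x =
      (∑ α, Γ x α lam μ * g x α ν) + ∑ α, Γ x α lam ν * g x μ α)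
    (hgD : ∀ μ ν, Differentiable ℝ fun y => g y μ ν)
    (huD : ∀ μ, Differentiable ℝ fun y => u y μ)
    (hPD : ∀ μ, Differentiable ℝ fun y => P y μ)
    (hfD : ∀ μ, Differentiable ℝ fun y => f y μ)
    (hNull : ∀ x, (∑ μ, ∑ ν, g x μ ν * P x μ * P x ν) = 0)
    (hUnit : ∀ x, (∑ μ, ∑ ν, g x μ ν * u x μ * u x ν) = -1)
    (hPgeo : ∀ x μ, dirD Γ P P μ x = 0)
    (hugeo : ∀ x μ, dirD Γ u u μ x = 0)
    (hpos : ∀ x, 0 < pscal g u P x)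
    (hOrth : ∀ x, (∑ μ, (lowerField g P x μ : ℂ) * f x μ) = 0)
    (hPar : ∀ x μ, dirDC Γ P f μ x = 0) :
    (∀ x μ,
      dirDC Γ P (epsF g u P f) μ x =
        ((P x μ / pscal g u P x : ℝ) : ℂ) *
          ∑ β, (∑ α, (g x β α : ℂ) * epsF g u P f x α) * ((dirD Γ P u β x : ℝ) : ℂ)) ∧
    (∀ x μ, (∑ ν, (SmixF g u P x μ ν : ℂ) * dirDC Γ P (epsF g u P f) ν x) = 0) :=
  transverse_polarization_transport_general g Γ u P f hgSymm hCompat hgD huD hPD hfD hNull hPgeo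
    hpos hOrth hPar
end

section
/- The curvature twist depends only on the Weyl (trace-free) part of the Riemann tensor: u^γ p̂^β ε^{ρσ} R_{γρβσ} = u^γ p̂^β ε^{ρσ} C_{γρβσ}, where R_{ρσμν} = C_{ρσμν} + (g_{ρ[μ} R_{ν]σ} − g_{σ[μ} R_{ν]ρ}) − (1/3) g_{ρ[μ} g_{ν]σ} R; i.e., the Ricci and scalar-curvature terms contribute zero when contracted with u^γ p̂^β ε^{ρσ}. -/
/-!
Each Ricci and scalar term of the decomposition, contracted with `u^γ p̂^β ε^{ρσ}`, contains one
of three factors: `ε^{ρσ}` contracted with a symmetric tensor (`Ric` or `g`), `ε^{ρσ} u_σ`, or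
`p̂_ρ ε^{ρσ}`. All three vanish because the Levi-Civita symbol is totally antisymmetric, and raising
indices with `g` preserves both the antisymmetry of `ε_{μν}` and its annihilation of `u` and `p̂`.
-/

/-- The Minkowski metric of signature (−,+,+,+) on ℝ⁴ (orthonormal coordinates). -/
noncomputable def eta : Matrix (Fin 4) (Fin 4) ℝ := Matrix.diagonal ![-1, 1, 1, 1]

/-- Index lowering with the metric. -/
noncomputable def lowerIdx (v : Fin 4 → ℝ) : Fin 4 → ℝ := eta.mulVec v

/-- Inner product g(u,v). -/
noncomputable def mdot (u v : Fin 4 → ℝ) : ℝ := ∑ μ, lowerIdx u μ * v μ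

/-- The Levi-Civita tensor ε_{αβμν} in orthonormal coordinates (ε_{0123} = 1). -/
noncomputable def lev (a b c d : Fin 4) : ℝ :=
  ∑ σ : Equiv.Perm (Fin 4),
    if σ 0 = a ∧ σ 1 = b ∧ σ 2 = c ∧ σ 3 = d then ((Equiv.Perm.sign σ : ℤ) : ℝ) else 0

/-- The screen rotator ε_{μν} := u^α p̂^β ε_{αβμν}. -/
noncomputable def screenRot (u phat : Fin 4 → ℝ) (μ ν : Fin 4) : ℝ :=
  ∑ α, ∑ β, u α * phat β * lev α β μ ν

/-- The raised screen rotator ε^{ρσ}. -/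
noncomputable def screenRotUp (u phat : Fin 4 → ℝ) (ρ σ : Fin 4) : ℝ :=
  ∑ μ, ∑ ν, (eta⁻¹) ρ μ * (eta⁻¹) σ ν * screenRot u phat μ ν

open Matrix
open Equiv (Perm swap)

theorem sum_sum_eq_zero_of_antisymm {ι M : Type*} [Fintype ι] [AddCommGroup M]
    [IsAddTorsionFree M] {f : ι → ι → M} (hf : ∀ i j, f j i = -f i j) :
    ∑ i, ∑ j, f i j = 0 := by
  refine self_eq_neg.mp ?_
  calc ∑ i, ∑ j, f i j = ∑ j, ∑ i, f i j := Finset.sum_comm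
    _ = ∑ j, ∑ i, -f j i :=
      Finset.sum_congr rfl fun j _ => Finset.sum_congr rfl fun i _ => hf j i
    _ = -∑ i, ∑ j, f i j := by simp only [Finset.sum_neg_distrib]

theorem sum_perm_sign_ite_comp {ι : Type*} [Fintype ι] [DecidableEq ι] (x : ι → ι)
    (τ : Perm ι) :
    ∑ σ : Perm ι, (if ⇑σ = x ∘ τ then ((Perm.sign σ : ℤ) : ℝ) else 0) =
      (∑ σ : Perm ι, if ⇑σ = x then ((Perm.sign σ : ℤ) : ℝ) else 0) * (Perm.sign τ : ℤ) := by
  rw [Finset.sum_mul, ← Equiv.sum_comp (Equiv.mulRight τ)]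
  refine Finset.sum_congr rfl fun σ _ => ?_
  simp only [Equiv.coe_mulRight, Perm.coe_mul, τ.surjective.injective_comp_right.eq_iff,
    Perm.sign_mul, Units.val_mul, Int.cast_mul, ite_mul, zero_mul]

theorem lev_eq_sum_perm (x : Fin 4 → Fin 4) :
    lev (x 0) (x 1) (x 2) (x 3) =
      ∑ σ : Perm (Fin 4), if ⇑σ = x then ((Perm.sign σ : ℤ) : ℝ) else 0 := by
  refine Finset.sum_congr rfl fun σ _ => if_congr ?_ rfl rfl
  simp [funext_iff, Fin.forall_fin_succ]

theorem lev_comp_swap (x : Fin 4 → Fin 4) {i j : Fin 4} (hij : i ≠ j) :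
    lev ((x ∘ swap i j) 0) ((x ∘ swap i j) 1) ((x ∘ swap i j) 2) ((x ∘ swap i j) 3) =
      -lev (x 0) (x 1) (x 2) (x 3) := by
  rw [lev_eq_sum_perm, lev_eq_sum_perm, sum_perm_sign_ite_comp, Perm.sign_swap hij]
  simp

theorem lev_antisymm_14 (a b c d : Fin 4) : lev d b c a = -lev a b c d :=
  lev_comp_swap ![a, b, c, d] (i := 0) (j := 3) (by decide)

theorem lev_antisymm_23 (a b c d : Fin 4) : lev a c b d = -lev a b c d :=
  lev_comp_swap ![a, b, c, d] (i := 1) (j := 2) (by decide)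

theorem lev_antisymm_34 (a b c d : Fin 4) : lev a b d c = -lev a b c d :=
  lev_comp_swap ![a, b, c, d] (i := 2) (j := 3) (by decide)

section ScreenRot

variable (u p : Fin 4 → ℝ)

theorem screenRot_transpose : (of (screenRot u p))ᵀ = -of (screenRot u p) := by
  ext μ ν
  simp only [transpose_apply, of_apply, Matrix.neg_apply, screenRot, lev_antisymm_34 _ _ μ ν,
    mul_neg, Finset.sum_neg_distrib]

theorem screenRot_mulVec_self : of (screenRot u p) *ᵥ u = 0 := by
  ext μ
  simp only [mulVec, dotProduct, of_apply, screenRot, Finset.sum_mul, Pi.zero_apply]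
  refine sum_sum_eq_zero_of_antisymm fun ν α => ?_
  rw [← Finset.sum_neg_distrib]
  refine Finset.sum_congr rfl fun β _ => ?_
  rw [lev_antisymm_14]
  ring

theorem vecMul_screenRot_self : p ᵥ* of (screenRot u p) = 0 := by
  ext ν
  simp only [vecMul, dotProduct, of_apply, screenRot, Finset.mul_sum, Pi.zero_apply]
  rw [Finset.sum_comm]
  refine Finset.sum_eq_zero fun α _ => sum_sum_eq_zero_of_antisymm fun μ β => ?_
  rw [lev_antisymm_23]
  ring

end ScreenRot

section Raise

variable {n K : Type*} [Fintype n] [DecidableEq n] [CommRing K]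

noncomputable def raiseIndices (g S : Matrix n n K) : Matrix n n K := g⁻¹ * S * g⁻¹ᵀ

variable (g : Matrix n n K) {S : Matrix n n K}

theorem raiseIndices_transpose_of_transpose_eq_neg (hS : Sᵀ = -S) :
    (raiseIndices g S)ᵀ = -raiseIndices g S := by
  simp only [raiseIndices, transpose_mul, transpose_transpose, hS, Matrix.mul_neg, Matrix.neg_mul,
    Matrix.mul_assoc]

theorem raiseIndices_mulVec_transpose_mulVec {v : n → K} (hg : IsUnit g.det) (hSv : S *ᵥ v = 0) :
    raiseIndices g S *ᵥ (gᵀ *ᵥ v) = 0 := by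
  rw [raiseIndices, mulVec_mulVec, Matrix.mul_assoc, ← transpose_mul, mul_nonsing_inv g hg,
    transpose_one, Matrix.mul_one, ← mulVec_mulVec, hSv, mulVec_zero]

theorem vecMul_mul_raiseIndices {v : n → K} (hg : IsUnit g.det) (hvS : v ᵥ* S = 0) :
    (v ᵥ* g) ᵥ* raiseIndices g S = 0 := by
  rw [raiseIndices, vecMul_vecMul, ← Matrix.mul_assoc, ← Matrix.mul_assoc, mul_nonsing_inv g hg,
    Matrix.one_mul, ← vecMul_vecMul, hvS, zero_vecMul]

end Raise

theorem eta_isSymm : eta.IsSymm := isSymm_diagonal _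

theorem isUnit_det_eta : IsUnit eta.det := by
  simp [eta, det_diagonal, Fin.prod_univ_four]

theorem of_screenRotUp_eq_raiseIndices (u p : Fin 4 → ℝ) :
    of (screenRotUp u p) = raiseIndices eta (of (screenRot u p)) := by
  ext ρ σ
  simp only [raiseIndices, of_apply, mul_apply, transpose_apply, Finset.sum_mul]
  rw [Finset.sum_comm]
  exact Finset.sum_congr rfl fun μ _ => Finset.sum_congr rfl fun ν _ => by ring

section ScreenRotUp

variable (u p : Fin 4 → ℝ)

theorem screenRotUp_transpose : (of (screenRotUp u p))ᵀ = -of (screenRotUp u p) := by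
  rw [of_screenRotUp_eq_raiseIndices]
  exact raiseIndices_transpose_of_transpose_eq_neg eta (screenRot_transpose u p)

theorem screenRotUp_mulVec_lowerIdx : of (screenRotUp u p) *ᵥ lowerIdx u = 0 := by
  rw [of_screenRotUp_eq_raiseIndices, lowerIdx]
  nth_rewrite 2 [← eta_isSymm.eq]
  exact raiseIndices_mulVec_transpose_mulVec eta isUnit_det_eta (screenRot_mulVec_self u p)

theorem lowerIdx_vecMul_screenRotUp : lowerIdx p ᵥ* of (screenRotUp u p) = 0 := by
  rw [of_screenRotUp_eq_raiseIndices, lowerIdx, ← vecMul_transpose]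
  nth_rewrite 1 [eta_isSymm.eq]
  exact vecMul_mul_raiseIndices eta isUnit_det_eta (vecMul_screenRot_self u p)

end ScreenRotUp

section CurvatureTwist

variable {ι R : Type*} [Fintype ι] [CommRing R]

def curvatureTwist (u p : ι → R) (E : Matrix ι ι R) : (ι → ι → ι → ι → R) →ₗ[R] R where
  toFun X := ∑ a, ∑ c, ∑ b, ∑ d, u a * p c * E b d * X a b c d
  map_add' X Y := by simp only [Pi.add_apply, mul_add, Finset.sum_add_distrib]
  map_smul' r X := by
    simp only [Pi.smul_apply, smul_eq_mul, RingHom.id_apply, Finset.mul_sum]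
    exact Finset.sum_congr rfl fun a _ => Finset.sum_congr rfl fun c _ =>
      Finset.sum_congr rfl fun b _ => Finset.sum_congr rfl fun d _ => by ring

variable (u p : ι → R) {E : Matrix ι ι R}

theorem curvatureTwist_eq_zero_of_isSymm [IsAddTorsionFree R] (hE : Eᵀ = -E) {S : Matrix ι ι R}
    (hS : S.IsSymm) (F : ι → ι → R) :
    curvatureTwist u p E (fun a b c d => F a c * S b d) = 0 := by
  have hES : ∑ b, ∑ d, E b d * S b d = 0 := sum_sum_eq_zero_of_antisymm fun b d => by
    rw [hS.apply, show E d b = -E b d from congrArg (· b d) hE, neg_mul]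
  refine Finset.sum_eq_zero fun a _ => Finset.sum_eq_zero fun c _ => ?_
  calc ∑ b, ∑ d, u a * p c * E b d * (F a c * S b d)
      = u a * p c * F a c * ∑ b, ∑ d, E b d * S b d := by
        simp only [Finset.mul_sum]
        exact Finset.sum_congr rfl fun b _ => Finset.sum_congr rfl fun d _ => by ring
    _ = 0 := by rw [hES, mul_zero]

theorem curvatureTwist_eq_zero_of_mulVec {g : Matrix ι ι R} (hE : E *ᵥ (gᵀ *ᵥ u) = 0)
    (F : ι → ι → R) : curvatureTwist u p E (fun a b c d => g a d * F c b) = 0 := by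
  show ∑ a, ∑ c, ∑ b, ∑ d, _ = 0
  rw [Finset.sum_comm]
  refine Finset.sum_eq_zero fun c _ => ?_
  rw [Finset.sum_comm]
  refine Finset.sum_eq_zero fun b _ => ?_
  rw [Finset.sum_comm]
  calc ∑ d, ∑ a, u a * p c * E b d * (g a d * F c b)
      = p c * F c b * (E *ᵥ (gᵀ *ᵥ u)) b := by
        simp only [mulVec, dotProduct, transpose_apply, Finset.mul_sum]
        exact Finset.sum_congr rfl fun d _ => Finset.sum_congr rfl fun a _ => by ring
    _ = 0 := by rw [hE, Pi.zero_apply, mul_zero]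

theorem curvatureTwist_eq_zero_of_vecMul {g : Matrix ι ι R} (hE : (g *ᵥ p) ᵥ* E = 0)
    (F : ι → ι → R) : curvatureTwist u p E (fun a b c d => g b c * F d a) = 0 := by
  show ∑ a, ∑ c, ∑ b, ∑ d, _ = 0
  refine Finset.sum_eq_zero fun a _ => ?_
  rw [Finset.sum_comm, Finset.sum_congr rfl fun b _ => Finset.sum_comm, Finset.sum_comm]
  refine Finset.sum_eq_zero fun d _ => ?_
  calc ∑ b, ∑ c, u a * p c * E b d * (g b c * F d a)
      = u a * F d a * ((g *ᵥ p) ᵥ* E) d := by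
        simp only [vecMul, mulVec, dotProduct, Finset.mul_sum, Finset.sum_mul]
        exact Finset.sum_congr rfl fun b _ => Finset.sum_congr rfl fun c _ => by ring
    _ = 0 := by rw [hE, Pi.zero_apply, mul_zero]

end CurvatureTwist

theorem curvature_twist_weyl_general
    (u phat : Fin 4 → ℝ)
    (R C : Fin 4 → Fin 4 → Fin 4 → Fin 4 → ℝ)
    (Ric : Fin 4 → Fin 4 → ℝ) (Rs : ℝ)
    (hRicSymm : ∀ μ ν, Ric μ ν = Ric ν μ)
    (hDecomp : ∀ ρ σ μ ν,
      R ρ σ μ ν = C ρ σ μ ν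
        + ((1 / 2) * (eta ρ μ * Ric ν σ - eta ρ ν * Ric μ σ)
            - (1 / 2) * (eta σ μ * Ric ν ρ - eta σ ν * Ric μ ρ))
        - (1 / 3) * ((1 / 2) * (eta ρ μ * eta ν σ - eta ρ ν * eta μ σ)) * Rs) :
    (∑ γ, ∑ β, ∑ ρ, ∑ σ, u γ * phat β * screenRotUp u phat ρ σ * R γ ρ β σ) =
      ∑ γ, ∑ β, ∑ ρ, ∑ σ, u γ * phat β * screenRotUp u phat ρ σ * C γ ρ β σ := by
  -- each term is in the shape of one of the three `curvatureTwist_eq_zero_of_*` lemmas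
  have hR : R = C
      + (1 / 2 : ℝ) • ((fun a b c d => eta a c * Ric b d) - fun a b c d => eta a d * Ric c b)
      - (1 / 2 : ℝ) • ((fun a b c d => eta b c * Ric d a) - fun a b c d => Ric a c * eta b d)
      - (Rs / 6) • ((fun a b c d => eta a c * eta b d) - fun a b c d => eta a d * eta c b) := by
    funext a b c d
    simp only [Pi.add_apply, Pi.sub_apply, Pi.smul_apply, smul_eq_mul]
    rw [hDecomp, hRicSymm d b, hRicSymm c a, eta_isSymm.apply b d]
    ring
  have hRic : IsSymm (Ric : Matrix (Fin 4) (Fin 4) ℝ) := Matrix.ext fun μ ν => hRicSymm ν μ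
  have hE := screenRotUp_transpose u phat
  have hEu : of (screenRotUp u phat) *ᵥ (etaᵀ *ᵥ u) = 0 := by
    rw [eta_isSymm.eq]
    exact screenRotUp_mulVec_lowerIdx u phat
  have hEp := lowerIdx_vecMul_screenRotUp u phat
  change curvatureTwist u phat (of (screenRotUp u phat)) R =
    curvatureTwist u phat (of (screenRotUp u phat)) C
  simp only [hR, map_add, map_sub, map_smul,
    curvatureTwist_eq_zero_of_isSymm u phat hE hRic eta,
    curvatureTwist_eq_zero_of_isSymm u phat hE eta_isSymm Ric,
    curvatureTwist_eq_zero_of_isSymm u phat hE eta_isSymm eta,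
    curvatureTwist_eq_zero_of_mulVec u phat hEu Ric,
    curvatureTwist_eq_zero_of_mulVec u phat hEu eta,
    curvatureTwist_eq_zero_of_vecMul u phat hEp Ric,
    sub_zero, smul_zero, add_zero]

/-- The curvature twist depends only on the Weyl part of the
Riemann tensor: u^γ p̂^β ε^{ρσ} R_{γρβσ} = u^γ p̂^β ε^{ρσ} C_{γρβσ}, where
R_{ρσμν} = C_{ρσμν} + (g_{ρ[μ}Ric_{ν]σ} − g_{σ[μ}Ric_{ν]ρ}) − (1/3) g_{ρ[μ}g_{ν]σ} Rs;
the Ricci and scalar-curvature terms contribute zero to the contraction. -/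
theorem curvature_twist_weyl
    (u phat : Fin 4 → ℝ)
    (hu : mdot u u = -1) (hp : mdot phat phat = 1) (hup : mdot u phat = 0)
    (R C : Fin 4 → Fin 4 → Fin 4 → Fin 4 → ℝ)
    (Ric : Fin 4 → Fin 4 → ℝ) (Rs : ℝ)
    (hRicSymm : ∀ μ ν, Ric μ ν = Ric ν μ)
    (hDecomp : ∀ ρ σ μ ν,
      R ρ σ μ ν = C ρ σ μ ν
        + ((1 / 2) * (eta ρ μ * Ric ν σ - eta ρ ν * Ric μ σ)
            - (1 / 2) * (eta σ μ * Ric ν ρ - eta σ ν * Ric μ ρ))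
        - (1 / 3) * ((1 / 2) * (eta ρ μ * eta ν σ - eta ρ ν * eta μ σ)) * Rs) :
    (∑ γ, ∑ β, ∑ ρ, ∑ σ, u γ * phat β * screenRotUp u phat ρ σ * R γ ρ β σ) =
      ∑ γ, ∑ β, ∑ ρ, ∑ σ, u γ * phat β * screenRotUp u phat ρ σ * C γ ρ β σ :=
  curvature_twist_weyl_general u phat R C Ric Rs hRicSymm hDecomp
end
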